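/- arXiv:1805.08054 — 4 statements merged into one kernel-verified Lean document; each statement's English description precedes it below -/
import Mathlib

section
/- (Theorem 4.11, converse direction: immersion and transversality.) Let n ≥ 1, let b_1, …, b_{2n}, v ∈ ℝ^{2n+2} be such that b_1, …, b_{2n}, v, J̃v are linearly independent, and let α : ℝ → ℝ be smooth. Define f : ℝ^{2n} × ℝ → ℝ^{2n+2} by f(x_1, …, x_{2n}, y) = x_1 b_1 + ⋯ + x_{2n} b_{2n} + A(y), where A : ℝ → ℝ^{2n+2} is any smooth map with A'(y) = cosh(α(y)) • J̃v + sinh(α(y)) • v. Then at every point the 2n+2 vectors ∂f/∂x_1, …, ∂f/∂x_{2n}, ∂f/∂y, J̃(∂f/∂y) are linearly independent; in particular f is an immersion and C := J̃(∂f/∂y) is a transversal vector field along f which is J̃-tangent (J̃C = ∂f/∂y is tangent). -/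
noncomputable section

/-- `ℝ^{2n+2}` realized as pairs. -/
abbrev PV (n : ℕ) : Type := (Fin (n+1) → ℝ) × (Fin (n+1) → ℝ)

/-- The canonical para-complex structure `J̃` on `ℝ^{2n+2}`. -/
def Jpara (n : ℕ) (v : PV n) : PV n := (v.2, v.1)

/-- The domain `ℝ^{2n} × ℝ` with coordinates `(x₁,…,x_{2n}, y)`. -/
abbrev Dom (n : ℕ) : Type := (Fin (2*n) → ℝ) × ℝ

/-- The coordinate direction `∂/∂xᵢ` in the domain. -/
def ex (n : ℕ) (i : Fin (2*n)) : Dom n := (Pi.single i 1, 0)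

/-- The coordinate direction `∂/∂y` in the domain. -/
def ey (n : ℕ) : Dom n := (0, 1)

/-- Theorem 4.11, converse direction: immersion and
transversality. For `f(x₁,…,x_{2n},y) = x₁b₁ + ⋯ + x_{2n}b_{2n} + A(y)`
with `A' = cosh(α y) • J̃v + sinh(α y) • v` and `b₁,…,b_{2n},v,J̃v` linearly
independent, at every point the `2n+2` vectors
`∂f/∂x₁, …, ∂f/∂x_{2n}, ∂f/∂y, J̃(∂f/∂y)` are linearly independent; in
particular `f` is an immersion and `C := J̃(∂f/∂y)` is transversal and
`J̃`-tangent (`J̃C = ∂f/∂y` is tangent). -/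
theorem stmt_5 (n : ℕ) (hn : 1 ≤ n)
    (b : Fin (2*n) → PV n) (v : PV n)
    (hindep : LinearIndependent ℝ (Sum.elim b ![v, Jpara n v]))
    (α : ℝ → ℝ) (hα : ContDiff ℝ (⊤ : ℕ∞) α)
    (A : ℝ → PV n)
    (hA : ∀ y : ℝ, HasDerivAt A (Real.cosh (α y) • Jpara n v + Real.sinh (α y) • v) y)
    (f : Dom n → PV n)
    (hfdef : ∀ p : Dom n, f p = (∑ i : Fin (2*n), p.1 i • b i) + A p.2) :
    ∀ p : Dom n,
      LinearIndependent ℝ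
        (Sum.elim (fun i : Fin (2*n) => fderiv ℝ f p (ex n i))
          ![fderiv ℝ f p (ey n), Jpara n (fderiv ℝ f p (ey n))]) ∧
      Jpara n (Jpara n (fderiv ℝ f p (ey n))) = fderiv ℝ f p (ey n) := by
  intro p
  set u : PV n := Real.cosh (α p.2) • Jpara n v + Real.sinh (α p.2) • v with hu
  set T : (Fin (2*n) → ℝ) →L[ℝ] PV n :=
    ∑ i : Fin (2*n), (ContinuousLinearMap.proj i).smulRight (b i) with hT
  set L : Dom n →L[ℝ] PV n :=
    T.comp (ContinuousLinearMap.fst ℝ (Fin (2*n) → ℝ) ℝ) +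
      (ContinuousLinearMap.snd ℝ (Fin (2*n) → ℝ) ℝ).smulRight u with hL
  have hTapp : ∀ w : Fin (2*n) → ℝ, T w = ∑ i : Fin (2*n), w i • b i := by
    intro w
    simp [hT, ContinuousLinearMap.sum_apply]
  have hF : HasFDerivAt f L p := by
    have h1 : HasFDerivAt (fun q : Dom n => T q.1)
        (T.comp (ContinuousLinearMap.fst ℝ (Fin (2*n) → ℝ) ℝ)) p :=
      T.hasFDerivAt.comp p (hasFDerivAt_fst)
    have h2 : HasFDerivAt (fun q : Dom n => A q.2)
        ((ContinuousLinearMap.snd ℝ (Fin (2*n) → ℝ) ℝ).smulRight u) p := by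
      exact ((hA p.2).hasFDerivAt).comp p (hasFDerivAt_snd (p := p))
    have h3 := h1.add h2
    apply h3.congr_of_eventuallyEq
    filter_upwards with q
    rw [hfdef q]
    simp only [Pi.add_apply, hTapp]
  have hfd : fderiv ℝ f p = L := hF.fderiv
  have hx : ∀ i : Fin (2*n), fderiv ℝ f p (ex n i) = b i := by
    intro i
    rw [hfd]
    simp [hL, ex, hTapp, Pi.single_apply]
  have hy : fderiv ℝ f p (ey n) = u := by
    rw [hfd]
    simp [hL, ey, hTapp]
  have hJu : Jpara n u = Real.cosh (α p.2) • v + Real.sinh (α p.2) • Jpara n v := by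
    simp [hu, Jpara, Prod.ext_iff]
  refine ⟨?_, rfl⟩
  rw [Fintype.linearIndependent_iff] at hindep ⊢
  intro c hc
  set ch := Real.cosh (α p.2) with hch
  set sh := Real.sinh (α p.2) with hsh
  set d : Fin (2*n) ⊕ Fin 2 → ℝ :=
    Sum.elim (fun i => c (Sum.inl i))
      ![c (Sum.inr 0) * sh + c (Sum.inr 1) * ch,
        c (Sum.inr 0) * ch + c (Sum.inr 1) * sh] with hd
  have hsum : ∑ i, d i • (Sum.elim b ![v, Jpara n v]) i = 0 := by
    rw [← hc]
    simp only [Fintype.sum_sum_type, Fin.sum_univ_two, Sum.elim_inl, Sum.elim_inr,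
      Matrix.cons_val_zero, Matrix.cons_val_one, Matrix.head_cons, hd, hx, hy, hJu]
    congr 1
    module
  have hkey := hindep d hsum
  have hd0 : c (Sum.inr 0) * sh + c (Sum.inr 1) * ch = 0 := by
    have := hkey (Sum.inr 0); simpa [hd] using this
  have hd1 : c (Sum.inr 0) * ch + c (Sum.inr 1) * sh = 0 := by
    have := hkey (Sum.inr 1); simpa [hd] using this
  have hsq : ch ^ 2 - sh ^ 2 = 1 := Real.cosh_sq_sub_sinh_sq (α p.2)
  rintro (i | j)
  · have := hkey (Sum.inl i); simpa [hd] using this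
  · have hc0 : c (Sum.inr 0) = 0 := by
      linear_combination ch * hd1 - sh * hd0 - c (Sum.inr 0) * hsq
    have hc1 : c (Sum.inr 1) = 0 := by
      linear_combination ch * hd0 - sh * hd1 - c (Sum.inr 1) * hsq
    fin_cases j
    · exact hc0
    · exact hc1
end
end

section
/- (Concrete form of Corollary 4.12.) Let n ≥ 1, let b_1, …, b_{2n}, v ∈ ℝ^{2n+2} with b_1, …, b_{2n}, v, J̃v linearly independent, let α : ℝ → ℝ be smooth, and let f(x_1, …, x_{2n}, y) = x_1 b_1 + ⋯ + x_{2n} b_{2n} + A(y) with A'(y) = cosh(α(y)) • J̃v + sinh(α(y)) • v. If at every point p the vector ∂²f/∂y²(p) lies in the span of ∂f/∂x_1(p), …, ∂f/∂x_{2n}(p), ∂f/∂y(p) (i.e., the second fundamental form induced by C = J̃(∂f/∂y) vanishes identically), then α is constant and the image of f is contained in an affine subspace of ℝ^{2n+2} of dimension 2n+1 (a hyperplane). -/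
noncomputable section

/-- concrete form of Corollary 4.12. For
`f(x₁,…,x_{2n},y) = x₁b₁ + ⋯ + x_{2n}b_{2n} + A(y)` with
`A' = cosh(α y) • J̃v + sinh(α y) • v` and `b₁,…,b_{2n},v,J̃v` linearly
independent: if at every point `∂²f/∂y²` lies in the span of
`∂f/∂x₁,…,∂f/∂x_{2n},∂f/∂y` (i.e. the second fundamental form induced by
`C = J̃(∂f/∂y)` vanishes identically), then `α` is constant and the image of
`f` lies in an affine hyperplane (`(2n+1)`-dimensional affine subspace). -/
theorem stmt_7 (n : ℕ) (hn : 1 ≤ n)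
    (b : Fin (2*n) → PV n) (v : PV n)
    (hindep : LinearIndependent ℝ (Sum.elim b ![v, Jpara n v]))
    (α : ℝ → ℝ) (hα : ContDiff ℝ (⊤ : ℕ∞) α)
    (A : ℝ → PV n)
    (hA : ∀ y : ℝ, HasDerivAt A (Real.cosh (α y) • Jpara n v + Real.sinh (α y) • v) y)
    (f : Dom n → PV n)
    (hfdef : ∀ p : Dom n, f p = (∑ i : Fin (2*n), p.1 i • b i) + A p.2)
    (htangent : ∀ p : Dom n,
      fderiv ℝ (fun q => fderiv ℝ f q (ey n)) p (ey n) ∈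
        Submodule.span ℝ
          (insert (fderiv ℝ f p (ey n))
            (Set.range fun i : Fin (2*n) => fderiv ℝ f p (ex n i)))) :
    (∃ c : ℝ, ∀ y : ℝ, α y = c) ∧
      ∃ (w : PV n) (W : Submodule ℝ (PV n)),
        Module.finrank ℝ W = 2*n + 1 ∧ ∀ p : Dom n, f p - w ∈ W := by
  classical
  set u : ℝ → PV n := fun t => Real.cosh (α t) • Jpara n v + Real.sinh (α t) • v with hu
  set Lc : Dom n →L[ℝ] PV n :=
    ∑ i : Fin (2*n), (((ContinuousLinearMap.proj i : (Fin (2*n) → ℝ) →L[ℝ] ℝ).comp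
      (ContinuousLinearMap.fst ℝ (Fin (2*n) → ℝ) ℝ)).smulRight (b i)) with hLc
  have hLapp : ∀ q : Dom n, Lc q = ∑ i : Fin (2*n), q.1 i • b i := by
    intro q
    simp [hLc, ContinuousLinearMap.sum_apply]
  have hf : f = fun q => Lc q + A q.2 := by
    funext q; rw [hfdef, hLapp]
  have hD : ∀ p : Dom n, HasFDerivAt f
      (Lc + ((1 : ℝ →L[ℝ] ℝ).smulRight (u p.2)).comp
        (ContinuousLinearMap.snd ℝ (Fin (2*n) → ℝ) ℝ)) p := by
    intro p
    rw [hf]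
    exact Lc.hasFDerivAt.add (((hA p.2).hasFDerivAt).comp p (hasFDerivAt_snd))
  have hDy : ∀ p : Dom n, fderiv ℝ f p (ey n) = u p.2 := by
    intro p
    rw [(hD p).fderiv]
    simp [ey, hLapp]
  have hDx : ∀ (p : Dom n) (i : Fin (2*n)), fderiv ℝ f p (ex n i) = b i := by
    intro p i
    rw [(hD p).fderiv]
    simp [ex, hLapp, Pi.single_apply]
  have hgeq : (fun q : Dom n => fderiv ℝ f q (ey n)) = fun q => u q.2 := funext hDy
  have hud : ∀ t : ℝ, HasDerivAt u ((Real.sinh (α t) * deriv α t) • Jpara n v +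
      (Real.cosh (α t) * deriv α t) • v) t := by
    intro t
    have hαd : HasDerivAt α (deriv α t) t := (hα.differentiable (by simp) t).hasDerivAt
    exact ((hαd.cosh).smul_const _).add ((hαd.sinh).smul_const _)
  have hD2 : ∀ p : Dom n, fderiv ℝ (fun q => fderiv ℝ f q (ey n)) p (ey n) =
      (Real.sinh (α p.2) * deriv α p.2) • Jpara n v +
        (Real.cosh (α p.2) * deriv α p.2) • v := by
    intro p
    rw [hgeq]
    have h : HasFDerivAt (fun q : Dom n => u q.2)
        (((1 : ℝ →L[ℝ] ℝ).smulRight ((Real.sinh (α p.2) * deriv α p.2) • Jpara n v +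
          (Real.cosh (α p.2) * deriv α p.2) • v)).comp
          (ContinuousLinearMap.snd ℝ (Fin (2*n) → ℝ) ℝ)) p :=
      ((hud p.2).hasFDerivAt).comp p (hasFDerivAt_snd)
    rw [h.fderiv]
    simp [ey]
  have hindep' := Fintype.linearIndependent_iff.mp hindep
  have hd0 : ∀ t : ℝ, deriv α t = 0 := by
    intro t
    have hmem := htangent ((0 : Fin (2*n) → ℝ), t)
    rw [hD2] at hmem
    simp only [hDy, hDx] at hmem
    rw [Submodule.mem_span_insert] at hmem
    obtain ⟨a, z, hz, heq⟩ := hmem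
    rw [Submodule.mem_span_range_iff_exists_fun] at hz
    obtain ⟨cc, hcc⟩ := hz
    set S := Real.sinh (α t) * deriv α t with hS
    set C := Real.cosh (α t) * deriv α t with hC
    have hsum : ∑ i : Fin (2*n) ⊕ Fin 2,
        (Sum.elim cc ![a * Real.sinh (α t) - C, a * Real.cosh (α t) - S]) i •
          Sum.elim b ![v, Jpara n v] i = 0 := by
      rw [Fintype.sum_sum_type]
      simp only [Sum.elim_inl, Sum.elim_inr]
      rw [hcc, Fin.sum_univ_two]
      have hz' : z = (S • Jpara n v + C • v) - a • u t := by
        rw [heq]; abel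
      rw [hz']
      simp only [hu, Matrix.cons_val_zero, Matrix.cons_val_one, Matrix.head_cons,
        smul_add, smul_smul, sub_smul]
      abel
    have h1 := hindep' _ hsum (Sum.inr 0)
    have h2 := hindep' _ hsum (Sum.inr 1)
    simp only [Sum.elim_inr, Matrix.cons_val_zero, Matrix.cons_val_one,
      Matrix.head_cons] at h1 h2
    have hid := Real.cosh_sq_sub_sinh_sq (α t)
    have e1 : Real.cosh (α t) * deriv α t = a * Real.sinh (α t) := by
      rw [hC] at h1; linarith
    have e2 : Real.sinh (α t) * deriv α t = a * Real.cosh (α t) := by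
      rw [hS] at h2; linarith
    linear_combination Real.cosh (α t) * e1 - Real.sinh (α t) * e2 - deriv α t * hid
  have hαconst : ∀ y : ℝ, α y = α 0 := fun y =>
    is_const_of_deriv_eq_zero (hα.differentiable (by simp)) hd0 y 0
  refine ⟨⟨α 0, hαconst⟩, ?_⟩
  set u0 : PV n := Real.cosh (α 0) • Jpara n v + Real.sinh (α 0) • v with hu0
  have huconst : ∀ t : ℝ, u t = u0 := by
    intro t; rw [hu0, hu]; simp only; rw [hαconst t]
  -- A is affine
  have hB : ∀ y : ℝ, HasDerivAt (fun t => A t - t • u0) 0 y := by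
    intro y
    have h1 : HasDerivAt (fun t : ℝ => t • u0) ((1 : ℝ) • u0) y :=
      (hasDerivAt_id y).smul_const u0
    have h2 : HasDerivAt A u0 y := by
      have := hA y
      rwa [show Real.cosh (α y) • Jpara n v + Real.sinh (α y) • v = u0 by
        rw [← huconst y]] at this
    have h3 := h2.sub h1
    rw [one_smul, sub_self] at h3
    exact h3
  have hAaff : ∀ y : ℝ, A y = A 0 + y • u0 := by
    intro y
    have := is_const_of_deriv_eq_zero (fun t => ((hB t).differentiableAt))
      (fun t => (hB t).deriv) y 0
    simp only [zero_smul, sub_zero] at this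
    have : A y - y • u0 = A 0 := this
    rw [← this]; abel
  -- the hyperplane
  have hli : LinearIndependent ℝ (Sum.elim b ![u0]) := by
    rw [Fintype.linearIndependent_iff]
    intro g hg
    have hsum : ∑ i : Fin (2*n) ⊕ Fin 2,
        (Sum.elim (g ∘ Sum.inl)
          ![g (Sum.inr 0) * Real.sinh (α 0), g (Sum.inr 0) * Real.cosh (α 0)]) i •
          Sum.elim b ![v, Jpara n v] i = 0 := by
      rw [Fintype.sum_sum_type] at hg ⊢
      simp only [Sum.elim_inl, Sum.elim_inr, Function.comp_apply] at hg ⊢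
      rw [Fin.sum_univ_two]
      rw [Fin.sum_univ_one] at hg
      simp only [Matrix.cons_val_zero, Matrix.cons_val_one, Matrix.head_cons] at hg ⊢
      rw [hu0] at hg
      rw [show (g (Sum.inr 0) * Real.sinh (α 0)) • v +
            (g (Sum.inr 0) * Real.cosh (α 0)) • Jpara n v =
          g (Sum.inr 0) • (Real.cosh (α 0) • Jpara n v + Real.sinh (α 0) • v) by
        simp only [smul_add, smul_smul]; abel]
      exact hg
    have hzero := hindep' _ hsum
    intro i
    match i with
    | Sum.inl j => exact hzero (Sum.inl j)
    | Sum.inr j =>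
      have h0 := hzero (Sum.inr 1)
      simp only [Sum.elim_inr, Matrix.cons_val_one, Matrix.head_cons] at h0
      have : g (Sum.inr 0) = 0 :=
        by
          rcases mul_eq_zero.mp h0 with h | h
          · exact h
          · exact absurd h (Real.cosh_pos (α 0)).ne'
      rw [Fin.fin_one_eq_zero j]
      exact this
  refine ⟨A 0, Submodule.span ℝ (Set.range (Sum.elim b ![u0])), ?_, ?_⟩
  · rw [finrank_span_eq_card hli]
    simp
  · intro p
    rw [hfdef, hAaff p.2]
    have hmem : (∑ i : Fin (2*n), p.1 i • b i) + p.2 • u0 ∈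
        Submodule.span ℝ (Set.range (Sum.elim b ![u0])) := by
      refine Submodule.add_mem _ (Submodule.sum_mem _ fun i _ => ?_)
        (Submodule.smul_mem _ _ (Submodule.subset_span ⟨Sum.inr 0, rfl⟩))
      exact Submodule.smul_mem _ _ (Submodule.subset_span ⟨Sum.inl i, rfl⟩)
    have : (∑ i : Fin (2*n), p.1 i • b i) + (A 0 + p.2 • u0) - A 0 =
        (∑ i : Fin (2*n), p.1 i • b i) + p.2 • u0 := by abel
    rw [this]
    exact hmem
end
end

section
/- (Example 4.6, setup.) Define f : ℝ³ → ℝ⁴ by f(x, y, z) = (x + y, sinh z, x − y, cosh z) and C : ℝ³ → ℝ⁴ by C(x, y, z) = (x, sinh z, x, cosh z). Then: J̃(∂f/∂x) = ∂f/∂x, J̃(∂f/∂y) = −∂f/∂y, C = J̃(∂f/∂z) + x • ∂f/∂x, and at every point of ℝ³ the four vectors ∂f/∂x, ∂f/∂y, ∂f/∂z, C are linearly independent. In particular f is an immersion and C is a J̃-tangent transversal vector field along f. -/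
noncomputable section

/-- The canonical para-complex structure on `ℝ⁴`: `J̃(a,b,c,d) = (c,d,a,b)`. -/
def J4 (w : Fin 4 → ℝ) : Fin 4 → ℝ := ![w 2, w 3, w 0, w 1]

/-- The immersion of Example 4.6. -/
def fEx (x y z : ℝ) : Fin 4 → ℝ := ![x + y, Real.sinh z, x - y, Real.cosh z]

/-- The transversal field of Example 4.6. -/
def CEx (x y z : ℝ) : Fin 4 → ℝ := ![x, Real.sinh z, x, Real.cosh z]

/-- `∂f/∂x`. -/
def fExx (x y z : ℝ) : Fin 4 → ℝ := deriv (fun t => fEx t y z) x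
/-- `∂f/∂y`. -/
def fExy (x y z : ℝ) : Fin 4 → ℝ := deriv (fun t => fEx x t z) y
/-- `∂f/∂z`. -/
def fExz (x y z : ℝ) : Fin 4 → ℝ := deriv (fun t => fEx x y t) z

theorem hasDerivAt_vecCons₄ {f₀ f₁ f₂ f₃ : ℝ → ℝ} {f₀' f₁' f₂' f₃' t : ℝ}
    (h₀ : HasDerivAt f₀ f₀' t) (h₁ : HasDerivAt f₁ f₁' t) (h₂ : HasDerivAt f₂ f₂' t)
    (h₃ : HasDerivAt f₃ f₃' t) :
    HasDerivAt (fun s => ![f₀ s, f₁ s, f₂ s, f₃ s]) ![f₀', f₁', f₂', f₃'] t :=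
  hasDerivAt_pi.2 fun i => by fin_cases i <;> assumption

theorem fExx_eq (x y z : ℝ) : fExx x y z = ![1, 0, 1, 0] :=
  (hasDerivAt_vecCons₄ ((hasDerivAt_id x).add_const y) (hasDerivAt_const x _)
    ((hasDerivAt_id x).sub_const y) (hasDerivAt_const x _)).deriv

theorem fExy_eq (x y z : ℝ) : fExy x y z = ![1, 0, -1, 0] :=
  (hasDerivAt_vecCons₄ ((hasDerivAt_id y).const_add x) (hasDerivAt_const y _)
    (by simpa using (hasDerivAt_id y).const_sub x) (hasDerivAt_const y _)).deriv

theorem fExz_eq (x y z : ℝ) : fExz x y z = ![0, Real.cosh z, 0, Real.sinh z] :=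
  (hasDerivAt_vecCons₄ (hasDerivAt_const z _) (Real.hasDerivAt_sinh z)
    (hasDerivAt_const z _) (Real.hasDerivAt_cosh z)).deriv

theorem det_partials_CEx (x y z : ℝ) :
    (Matrix.of ![fExx x y z, fExy x y z, fExz x y z, CEx x y z]).det = 2 := by
  rw [fExx_eq, fExy_eq, fExz_eq]
  simp [CEx, Matrix.det_succ_row_zero, Fin.sum_univ_succ, Fin.succAbove]
  linear_combination 2 * Real.cosh_sq_sub_sinh_sq z

theorem linearIndependent_partials_CEx (x y z : ℝ) :
    LinearIndependent ℝ ![fExx x y z, fExy x y z, fExz x y z, CEx x y z] := by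
  change LinearIndependent ℝ (Matrix.of ![fExx x y z, fExy x y z, fExz x y z, CEx x y z]).row
  refine Matrix.linearIndependent_rows_iff_isUnit.2 ?_
  rw [Matrix.isUnit_iff_isUnit_det, det_partials_CEx]
  exact isUnit_iff_ne_zero.2 two_ne_zero

/-- Example 4.6, setup: `J̃(∂f/∂x) = ∂f/∂x`,
`J̃(∂f/∂y) = −∂f/∂y`, `C = J̃(∂f/∂z) + x • ∂f/∂x`, and everywhere the four
vectors `∂f/∂x, ∂f/∂y, ∂f/∂z, C` are linearly independent; hence `f` is an
immersion and `C` is a `J̃`-tangent transversal vector field along `f`. -/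
theorem stmt_8 :
    ∀ x y z : ℝ,
      J4 (fExx x y z) = fExx x y z ∧
      J4 (fExy x y z) = -(fExy x y z) ∧
      CEx x y z = J4 (fExz x y z) + x • fExx x y z ∧
      LinearIndependent ℝ ![fExx x y z, fExy x y z, fExz x y z, CEx x y z] := by
  intro x y z
  refine ⟨?_, ?_, ?_, linearIndependent_partials_CEx x y z⟩
  · simp [fExx_eq, J4]
  · simp [fExy_eq, J4]
  · simp [fExz_eq, fExx_eq, J4, CEx]
end
end

section
/- (Example 4.6, Riemannian normal is not J̃-tangent.) For f(x, y, z) = (x + y, sinh z, x − y, cosh z), define N : ℝ³ → ℝ⁴ by N(x, y, z) = (0, sinh z / √(cosh²z + sinh²z), 0, −cosh z / √(cosh²z + sinh²z)). Then with respect to the standard Euclidean inner product on ℝ⁴: ⟨N, ∂f/∂x⟩ = ⟨N, ∂f/∂y⟩ = ⟨N, ∂f/∂z⟩ = 0 and ⟨N, N⟩ = 1 at every point, so N is the unit normal field of f; moreover, for every point with z ≠ 0, the vector J̃N does NOT lie in the span of ∂f/∂x, ∂f/∂y, ∂f/∂z, i.e., N is not J̃-tangent there. -/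
set_option linter.unusedVariables false

noncomputable section

/-- The Euclidean unit normal field of Example 4.6. -/
def NEx (x y z : ℝ) : Fin 4 → ℝ :=
  ![0, Real.sinh z / Real.sqrt (Real.cosh z ^ 2 + Real.sinh z ^ 2), 0,
    -(Real.cosh z / Real.sqrt (Real.cosh z ^ 2 + Real.sinh z ^ 2))]

/- The tangent vectors `(1,0,1,0)`, `(1,0,-1,0)`, `(0,cosh z,0,sinh z)` are orthogonal to `N`,
so `⟨N, ·⟩` vanishes on their span. But `⟨N, J̃N⟩ = -2 sinh z cosh z / (cosh² z + sinh² z)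
= -tanh 2z`, which is nonzero for `z ≠ 0`. -/

theorem hasDerivAt_vecCons_four {a b c d : ℝ → ℝ} {a' b' c' d' x : ℝ}
    (ha : HasDerivAt a a' x) (hb : HasDerivAt b b' x) (hc : HasDerivAt c c' x)
    (hd : HasDerivAt d d' x) :
    HasDerivAt (fun t => ![a t, b t, c t, d t]) ![a', b', c', d'] x := by
  rw [hasDerivAt_pi]
  intro i
  fin_cases i <;> simpa

theorem notMem_span_of_dotProduct_eq_zero {ι R : Type*} [Fintype ι] [CommSemiring R]
    {S : Set (ι → R)} {n v : ι → R} (hS : ∀ u ∈ S, n ⬝ᵥ u = 0) (hv : n ⬝ᵥ v ≠ 0) :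
    v ∉ Submodule.span R S := by
  have hle : Submodule.span R S ≤ LinearMap.ker (dotProductBilin R R n) :=
    Submodule.span_le.mpr hS
  exact fun hmem => hv (hle hmem)

theorem NEx_dotProduct_fExx (x y z : ℝ) : NEx x y z ⬝ᵥ fExx x y z = 0 := by
  simp [dotProduct, Fin.sum_univ_four, NEx, fExx_eq]

theorem NEx_dotProduct_fExy (x y z : ℝ) : NEx x y z ⬝ᵥ fExy x y z = 0 := by
  simp [dotProduct, Fin.sum_univ_four, NEx, fExy_eq]

theorem NEx_dotProduct_fExz (x y z : ℝ) : NEx x y z ⬝ᵥ fExz x y z = 0 := by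
  simp only [dotProduct, Fin.sum_univ_four, NEx, fExz_eq, Matrix.cons_val]
  ring

theorem NEx_dotProduct_self (x y z : ℝ) : NEx x y z ⬝ᵥ NEx x y z = 1 := by
  have hpos : 0 < Real.cosh z ^ 2 + Real.sinh z ^ 2 := by positivity
  simp only [dotProduct, Fin.sum_univ_four, NEx, Matrix.cons_val]
  field_simp
  rw [Real.sq_sqrt hpos.le]
  ring

theorem NEx_dotProduct_J4 (x y z : ℝ) : NEx x y z ⬝ᵥ J4 (NEx x y z) = -Real.tanh (2 * z) := by
  have hpos : 0 < Real.cosh z ^ 2 + Real.sinh z ^ 2 := by positivity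
  simp only [dotProduct, Fin.sum_univ_four, NEx, J4, Matrix.cons_val, Real.tanh_eq_sinh_div_cosh,
    Real.cosh_two_mul, Real.sinh_two_mul]
  field_simp
  rw [Real.sq_sqrt hpos.le]
  ring

/-- Example 4.6, the Riemannian normal is not `J̃`-tangent:
`N` is orthogonal to `∂f/∂x, ∂f/∂y, ∂f/∂z` and has unit length with respect
to the standard Euclidean inner product on `ℝ⁴`, so `N` is the unit normal of
`f`; but for `z ≠ 0`, `J̃N` does not lie in `span{∂f/∂x, ∂f/∂y, ∂f/∂z}`,
i.e. `N` is not `J̃`-tangent there. -/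
theorem stmt_10 :
    ∀ x y z : ℝ,
      (∑ i : Fin 4, NEx x y z i * fExx x y z i) = 0 ∧
      (∑ i : Fin 4, NEx x y z i * fExy x y z i) = 0 ∧
      (∑ i : Fin 4, NEx x y z i * fExz x y z i) = 0 ∧
      (∑ i : Fin 4, NEx x y z i * NEx x y z i) = 1 ∧
      (z ≠ 0 →
        J4 (NEx x y z) ∉
          Submodule.span ℝ
            ({fExx x y z, fExy x y z, fExz x y z} : Set (Fin 4 → ℝ))) := by
  intro x y z
  refine ⟨NEx_dotProduct_fExx x y z, NEx_dotProduct_fExy x y z, NEx_dotProduct_fExz x y z,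
    NEx_dotProduct_self x y z, fun hz => notMem_span_of_dotProduct_eq_zero (n := NEx x y z) ?_ ?_⟩
  · rintro u (rfl | rfl | rfl)
    exacts [NEx_dotProduct_fExx x y z, NEx_dotProduct_fExy x y z, NEx_dotProduct_fExz x y z]
  · rw [NEx_dotProduct_J4, neg_ne_zero, Real.tanh_eq_sinh_div_cosh]
    exact div_ne_zero (Real.sinh_ne_zero.mpr (mul_ne_zero two_ne_zero hz)) (Real.cosh_pos _).ne'
end
end
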